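/- arXiv:1810.01042 — 3 statements merged into one kernel-verified Lean document; each statement's English description precedes it below -/
import Mathlib

section
/- If u, v ∈ ℝⁿ satisfy u ≠ v and u ∼_L v, then the midpoint (1/2)(u + v) satisfies (1/2)(u + v) ≻_L u. (Consequently the leximin maximizer of a convex set is unique.) -/
/-- The components of `p`, sorted in nondecreasing order. -/
noncomputable def sortedVec {n : ℕ} (p : Fin n → ℝ) : List ℝ :=
  (Multiset.ofList (List.ofFn p)).sort (· ≤ ·)

/-- `p ≻_L q` : strict leximin dominance (the sorted lists are compared
lexicographically, from smallest component to largest). -/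
def LeximinGT {n : ℕ} (p q : Fin n → ℝ) : Prop :=
  List.Lex (· < ·) (sortedVec q) (sortedVec p)

/-- `p ⪰_L q` : weak leximin dominance. -/
def LeximinGE {n : ℕ} (p q : Fin n → ℝ) : Prop :=
  LeximinGT p q ∨ sortedVec p = sortedVec q

/-- Disagreement projection of `u` onto `v`: `π(u,v)ᵢ = uᵢ` if `uᵢ < vᵢ`, else `1`. -/
noncomputable def dproj {n : ℕ} (u v : Fin n → ℝ) : Fin n → ℝ :=
  fun i => if u i < v i then u i else 1


lemma sortedVec_coe {n : ℕ} (p : Fin n → ℝ) :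
    (↑(sortedVec p) : Multiset ℝ) = Multiset.map p (Finset.univ : Finset (Fin n)).val := by
  rw [sortedVec, Multiset.sort_eq]
  simp [List.ofFn_eq_map, Finset.univ, Fintype.elems]

lemma sortedVec_sorted {n : ℕ} (p : Fin n → ℝ) : (sortedVec p).Pairwise (· ≤ ·) :=
  Multiset.pairwise_sort _ _

lemma sortedVec_length {n : ℕ} (p : Fin n → ℝ) : (sortedVec p).length = n := by
  have := congrArg Multiset.card (sortedVec_coe p)
  simpa using this

-- Lemma F
lemma exists_le_of_le_map {α β : Type*} [DecidableEq α] [DecidableEq β] {f : α → β}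
    {t : Multiset β} : ∀ {s : Multiset α}, t ≤ Multiset.map f s →
    ∃ s' ≤ s, Multiset.map f s' = t := by
  induction t using Multiset.induction_on with
  | empty => exact fun _ => ⟨0, Multiset.zero_le _, rfl⟩
  | cons b t ih =>
    intro s h
    have hb : b ∈ Multiset.map f s := Multiset.mem_of_le h (Multiset.mem_cons_self _ _)
    obtain ⟨a, ha, rfl⟩ := Multiset.mem_map.1 hb
    have ht : t ≤ Multiset.map f (s.erase a) := by
      rw [Multiset.map_erase_of_mem _ _ ha]
      simpa using Multiset.erase_le_erase (f a) h
    obtain ⟨s', hs', hmap⟩ := ih ht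
    refine ⟨a ::ₘ s', ?_, by simp [hmap]⟩
    calc a ::ₘ s' ≤ a ::ₘ s.erase a := Multiset.cons_le_cons _ hs'
    _ = s := Multiset.cons_erase ha

-- Lemma D
lemma sum_take_le_of_sublist {t l : List ℝ} (h : List.Sublist t l) (hl : l.Pairwise (· ≤ ·)) :
    (l.take t.length).sum ≤ t.sum := by
  induction h with
  | slnil => simp
  | @cons l₁ l₂ a h ih =>
    rcases Nat.eq_zero_or_pos l₁.length with h0 | h0
    · simp [List.length_eq_zero_iff.mp h0]
    have hlen : l₁.length ≤ l₂.length := h.length_le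
    have hlt : l₁.length - 1 < l₂.length := by omega
    have hs2 : l₂.Pairwise (· ≤ ·) := hl.of_cons
    have ha : a ≤ l₂.get ⟨l₁.length - 1, hlt⟩ := by
      rcases List.rel_of_pairwise_cons hl (List.get_mem l₂ _) with h'
      exact h'
    have htake : (a :: l₂).take l₁.length = a :: l₂.take (l₁.length - 1) := by
      obtain ⟨k, hk⟩ : ∃ k, l₁.length = k + 1 := ⟨l₁.length - 1, by omega⟩
      rw [hk, List.take_succ_cons]
      congr 2
    have hsucc : (l₂.take ((l₁.length - 1) + 1)).sum
        = (l₂.take (l₁.length - 1)).sum + l₂.get ⟨l₁.length - 1, hlt⟩ := by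
      simpa using List.sum_take_succ l₂ (l₁.length - 1) hlt
    have : (l₂.take l₁.length).sum ≤ l₁.sum := ih hs2
    rw [htake]
    have h1 : l₁.length - 1 + 1 = l₁.length := by omega
    rw [h1] at hsucc
    simp only [List.sum_cons]
    linarith
  | @cons_cons l₁ l₂ a h ih =>
    have hs2 : l₂.Pairwise (· ≤ ·) := hl.of_cons
    simpa using add_le_add_left (ih hs2) a

-- Lemma E : any sub-multiset of indices has value-sum at least the prefix of the sorted list
lemma take_sum_le_submultiset {n : ℕ} (p : Fin n → ℝ) {s : Multiset (Fin n)}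
    (hs : s ≤ (Finset.univ : Finset (Fin n)).val) :
    ((sortedVec p).take (Multiset.card s)).sum ≤ (Multiset.map p s).sum := by
  set t' : List ℝ := (Multiset.map p s).sort (· ≤ ·) with ht'
  have hco : (↑t' : Multiset ℝ) = Multiset.map p s := Multiset.sort_eq _ _
  have hle : (↑t' : Multiset ℝ) ≤ ↑(sortedVec p) := by
    rw [hco, sortedVec_coe]; exact Multiset.map_le_map hs
  have hsub : List.Sublist t' (sortedVec p) :=
    List.sublist_of_subperm_of_pairwise (Multiset.coe_le.mp hle)
      (Multiset.pairwise_sort _ _) (sortedVec_sorted p)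
  have hlen : t'.length = Multiset.card s := by
    have := congrArg Multiset.card hco
    simpa using this
  have hsum : t'.sum = (Multiset.map p s).sum := by
    rw [← hco]; simp
  calc ((sortedVec p).take (Multiset.card s)).sum
      = ((sortedVec p).take t'.length).sum := by rw [hlen]
    _ ≤ t'.sum := sum_take_le_of_sublist hsub (sortedVec_sorted p)
    _ = _ := hsum

-- Lemma C : lexicographic comparison from prefix sums
lemma lex_of_prefix_sums : ∀ (l m : List ℝ), l.length = m.length →
    (∀ k, (l.take k).sum ≤ (m.take k).sum) → l ≠ m → List.Lex (· < ·) l m := by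
  intro l
  induction l with
  | nil => intro m hlen _ hne; cases m with
    | nil => exact absurd rfl hne
    | cons b m => simp at hlen
  | cons a l ih =>
    intro m hlen hs hne
    cases m with
    | nil => simp at hlen
    | cons b m =>
      have h1 : a ≤ b := by have := hs 1; simpa using this
      rcases lt_or_eq_of_le h1 with hlt | heq
      · exact List.Lex.rel hlt
      · subst heq
        have hne' : l ≠ m := fun h => hne (by rw [h])
        refine List.Lex.cons (ih m (by simpa using hlen) ?_ hne')
        intro k
        have := hs (k + 1)
        simpa using this

lemma sum_sq_eq_of_sortedVec_eq {n : ℕ} (p q : Fin n → ℝ) (h : sortedVec p = sortedVec q) :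
    ∑ i, p i ^ 2 = ∑ i, q i ^ 2 := by
  have hm : Multiset.map p (Finset.univ : Finset (Fin n)).val
      = Multiset.map q (Finset.univ : Finset (Fin n)).val := by
    rw [← sortedVec_coe, ← sortedVec_coe, h]
  have := congrArg (fun (s : Multiset ℝ) => (Multiset.map (fun x => x ^ 2) s).sum) hm
  simpa [Multiset.map_map, Finset.sum, Function.comp_def] using this


/-- if `u ≠ v` and `u ∼_L v`, then the midpoint `(1/2)(u+v) ≻_L u`. -/
theorem stmt_2 {n : ℕ} (u v : Fin n → ℝ) (hne : u ≠ v)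
    (hsim : sortedVec u = sortedVec v) :
    LeximinGT ((1 / 2 : ℝ) • (u + v)) u := by
  show List.Lex (· < ·) (sortedVec u) (sortedVec ((1 / 2 : ℝ) • (u + v)))
  set w : Fin n → ℝ := (1 / 2 : ℝ) • (u + v) with hwdef
  have hw : ∀ i, w i = (u i + v i) / 2 := by
    intro i; simp [hwdef]; ring
  -- Lemma B : the sorted vectors differ
  have hBne : sortedVec u ≠ sortedVec w := by
    intro h
    have h1 : ∑ i, u i ^ 2 = ∑ i, w i ^ 2 := sum_sq_eq_of_sortedVec_eq _ _ h
    have h2 : ∑ i, u i ^ 2 = ∑ i, v i ^ 2 := sum_sq_eq_of_sortedVec_eq _ _ hsim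
    obtain ⟨j, hj⟩ := Function.ne_iff.mp hne
    have hlt : ∑ i, w i ^ 2 < ∑ i, ((u i ^ 2 + v i ^ 2) / 2) := by
      refine Finset.sum_lt_sum (fun i _ => ?_) ⟨j, Finset.mem_univ j, ?_⟩
      · rw [hw i]; nlinarith [sq_nonneg (u i - v i)]
      · rw [hw j]
        have h0 : u j - v j ≠ 0 := sub_ne_zero.mpr hj
        have := mul_self_pos.mpr h0
        nlinarith
    have heq : ∑ i, ((u i ^ 2 + v i ^ 2) / 2) = ∑ i, u i ^ 2 := by
      rw [← Finset.sum_div, Finset.sum_add_distrib, ← h2]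
      ring
    rw [heq, ← h1] at hlt
    exact lt_irrefl _ hlt
  -- Lemma A : prefix sums
  have hA : ∀ k, ((sortedVec u).take k).sum ≤ ((sortedVec w).take k).sum := by
    intro k
    set t : List ℝ := (sortedVec w).take k with htdef
    have hle : (↑t : Multiset ℝ) ≤ Multiset.map w (Finset.univ : Finset (Fin n)).val := by
      rw [← sortedVec_coe]
      exact Multiset.coe_le.mpr (List.take_sublist k _).subperm
    obtain ⟨s, hs, hmap⟩ := exists_le_of_le_map hle
    have hcard : Multiset.card s = t.length := by
      have := congrArg Multiset.card hmap
      simpa using this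
    have hsum : t.sum = ((Multiset.map u s).sum + (Multiset.map v s).sum) / 2 := by
      have h1 : Multiset.map w s = Multiset.map (fun i => (u i + v i) / 2) s :=
        Multiset.map_congr rfl (fun i _ => hw i)
      have : t.sum = (Multiset.map w s).sum := by rw [hmap]; simp
      rw [this, h1]
      rw [show (fun i => (u i + v i) / 2) = (fun i => (u i) * (1/2) + (v i) * (1/2)) by
        funext i; ring]
      rw [Multiset.sum_map_add]
      rw [Multiset.sum_map_mul_right, Multiset.sum_map_mul_right]
      ring
    have hu' := take_sum_le_submultiset u hs
    have hv' := take_sum_le_submultiset v hs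
    rw [hcard] at hu' hv'
    rw [← hsim] at hv'
    have hkey : ((sortedVec u).take t.length).sum ≤ t.sum := by
      rw [hsum]; linarith
    -- relate take k and take t.length
    have hlen : t.length = min k n := by
      rw [htdef, List.length_take, sortedVec_length]
    have htk : (sortedVec u).take k = (sortedVec u).take t.length := by
      rw [List.take_eq_take_iff]
      rw [sortedVec_length, hlen]
      omega
    rw [htk]
    exact hkey
  exact lex_of_prefix_sums _ _ (by rw [sortedVec_length, sortedVec_length]) hA hBne
end

section
/- Let u, v ∈ [0,1]ⁿ be such that the sets X = {i : u_i > v_i} and Y = {i : v_i > u_i} are both nonempty. If π(u,v) ⪰_L π(v,u), then min_{i ∈ Y} u_i ≥ min_{i ∈ X} v_i. -/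
lemma mem_sortedVec {n : ℕ} (p : Fin n → ℝ) (x : ℝ) :
    x ∈ sortedVec p ↔ ∃ i, p i = x := by
  simp [sortedVec, List.mem_ofFn, eq_comm]

lemma sortedVec_ne_nil {n : ℕ} (p : Fin n → ℝ) (hn : 0 < n) : sortedVec p ≠ [] := by
  have h : (sortedVec p).length = n := by simp [sortedVec]
  intro hnil
  rw [hnil] at h
  simp at h
  omega

lemma sorted_head_le {l : List ℝ} (hs : l.Pairwise (· ≤ ·)) (h : l ≠ []) {x : ℝ}
    (hx : x ∈ l) : l.head h ≤ x := by
  cases l with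
  | nil => exact absurd rfl h
  | cons a t =>
    rcases List.mem_cons.1 hx with rfl | hx
    · simp
    · exact List.rel_of_pairwise_cons hs hx

lemma head_sortedVec {n : ℕ} (p : Fin n → ℝ)
    (hn : (Finset.univ : Finset (Fin n)).Nonempty) (h : sortedVec p ≠ []) :
    (sortedVec p).head h = Finset.univ.inf' hn p := by
  have hs : (sortedVec p).Pairwise (· ≤ ·) := Multiset.pairwise_sort _ _
  apply le_antisymm
  · obtain ⟨j, _, hj⟩ := Finset.exists_mem_eq_inf' hn p
    rw [hj]
    exact sorted_head_le hs h ((mem_sortedVec p _).2 ⟨j, rfl⟩)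
  · obtain ⟨i, hi⟩ := (mem_sortedVec p _).1 (List.head_mem h)
    rw [← hi]
    exact Finset.inf'_le _ (Finset.mem_univ i)

lemma lex_head_le {l₁ l₂ : List ℝ} (h : List.Lex (· < ·) l₁ l₂)
    (h₁ : l₁ ≠ []) (h₂ : l₂ ≠ []) : l₁.head h₁ ≤ l₂.head h₂ := by
  cases h with
  | nil => exact absurd rfl h₁
  | cons h' => simp
  | rel h' => simpa using le_of_lt h'

/-- if `u, v ∈ [0,1]ⁿ`, `X = {i : uᵢ > vᵢ}` and `Y = {i : vᵢ > uᵢ}`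
are nonempty, and `π(u,v) ⪰_L π(v,u)`, then `min_{i ∈ Y} uᵢ ≥ min_{i ∈ X} vᵢ`. -/
theorem stmt_5 {n : ℕ} (u v : Fin n → ℝ)
    (hu : ∀ i, u i ∈ Set.Icc (0 : ℝ) 1) (hv : ∀ i, v i ∈ Set.Icc (0 : ℝ) 1)
    (hX : (Finset.univ.filter (fun i => v i < u i)).Nonempty)
    (hY : (Finset.univ.filter (fun i => u i < v i)).Nonempty)
    (hdom : LeximinGE (dproj u v) (dproj v u)) :
    (Finset.univ.filter (fun i => v i < u i)).inf' hX v ≤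
      (Finset.univ.filter (fun i => u i < v i)).inf' hY u := by
  have hn : (Finset.univ : Finset (Fin n)).Nonempty := by
    obtain ⟨i, _⟩ := hX; exact ⟨i, Finset.mem_univ i⟩
  have hpos : 0 < n := by
    obtain ⟨i, _⟩ := hn; exact i.pos
  -- inf' over univ of dproj u v equals inf' over Y of u
  have key : ∀ (a b : Fin n → ℝ) (hb : ∀ i, b i ≤ 1)
      (hS : (Finset.univ.filter (fun i => a i < b i)).Nonempty),
      Finset.univ.inf' hn (dproj a b) =
        (Finset.univ.filter (fun i => a i < b i)).inf' hS a := by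
    intro a b hb hS
    apply le_antisymm
    · obtain ⟨j, hj, hje⟩ := Finset.exists_mem_eq_inf' hS a
      rw [hje]
      have hjlt : a j < b j := (Finset.mem_filter.1 hj).2
      have : dproj a b j = a j := by simp [dproj, hjlt]
      rw [← this]
      exact Finset.inf'_le _ (Finset.mem_univ j)
    · apply Finset.le_inf'
      intro i _
      by_cases hi : a i < b i
      · have : dproj a b i = a i := by simp [dproj, hi]
        rw [this]
        exact Finset.inf'_le _ (Finset.mem_filter.2 ⟨Finset.mem_univ i, hi⟩)
      · have : dproj a b i = 1 := by simp [dproj, hi]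
        rw [this]
        obtain ⟨j, hj, hje⟩ := Finset.exists_mem_eq_inf' hS a
        rw [hje]
        exact le_of_lt (lt_of_lt_of_le (Finset.mem_filter.1 hj).2 (hb j))
  have h₁ := sortedVec_ne_nil (dproj u v) hpos
  have h₂ := sortedVec_ne_nil (dproj v u) hpos
  have hhead : (sortedVec (dproj v u)).head h₂ ≤ (sortedVec (dproj u v)).head h₁ := by
    rcases hdom with hlex | heq
    · exact lex_head_le hlex h₂ h₁
    · exact le_of_eq (by congr 1; exact heq.symm)
  rw [head_sortedVec _ hn, head_sortedVec _ hn,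
    key v u (fun i => (hu i).2) hX, key u v (fun i => (hv i).2) hY] at hhead
  exact hhead
end

section
/- Pareto dominance implies strict leximin dominance: if u, v ∈ ℝⁿ satisfy u_i ≥ v_i for all i and u ≠ v, then u ≻_L v. -/
lemma lex_of_forall2 {a b : List ℝ} (h : List.Forall₂ (· ≤ ·) a b) (hne : a ≠ b) :
    List.Lex (· < ·) a b := by
  induction h with
  | nil => exact absurd rfl hne
  | @cons x y l₁ l₂ hxy _ ih =>
    rcases eq_or_lt_of_le hxy with h' | h'
    · subst h'
      exact List.Lex.cons (ih (by intro h; exact hne (by rw [h])))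
    · exact List.Lex.rel h'

lemma sortedVec_eq {n : ℕ} (p : Fin n → ℝ) :
    sortedVec p = List.ofFn (p ∘ Tuple.sort p) := by
  have hperm : (sortedVec p).Perm (List.ofFn (p ∘ Tuple.sort p)) := by
    refine List.Perm.trans ?_ ((Tuple.sort p).ofFn_comp_perm p).symm
    rw [← Multiset.coe_eq_coe]
    exact Multiset.sort_eq _ _
  have hs1 : (sortedVec p).Pairwise (· ≤ ·) := Multiset.pairwise_sort _ _
  have hs2 : (List.ofFn (p ∘ Tuple.sort p)).Pairwise (· ≤ ·) := by
    rw [List.pairwise_ofFn]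
    intro i j hij
    exact Tuple.monotone_sort p hij.le
  exact List.Perm.eq_of_pairwise' hs1 hs2 hperm

/-- Pareto dominance implies strict leximin dominance. -/
theorem stmt_8 {n : ℕ} (u v : Fin n → ℝ)
    (hge : ∀ i, v i ≤ u i) (hne : u ≠ v) :
    LeximinGT u v := by
  classical
  set A : Fin n → ℝ := u ∘ Tuple.sort u with hA
  set B : Fin n → ℝ := v ∘ Tuple.sort v with hB
  have hAmono : Monotone A := Tuple.monotone_sort u
  have hBmono : Monotone B := Tuple.monotone_sort v
  -- pointwise domination of order statistics
  have hpw : ∀ j, B j ≤ A j := by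
    intro j
    rw [← Tuple.lt_card_le_iff_apply_le_of_monotone hBmono (a := A j) (j := j), ← Fintype.card_subtype]
    have h1 : (j : ℕ) < Fintype.card {i // A i ≤ A j} := by
      rw [Fintype.card_subtype, Tuple.lt_card_le_iff_apply_le_of_monotone hAmono]
    refine lt_of_lt_of_le h1 ?_
    have e1 : Fintype.card {i // A i ≤ A j} = Fintype.card {i // u i ≤ A j} :=
      Fintype.card_congr ((Tuple.sort u).subtypeEquiv (fun i => Iff.rfl))
    have e2 : Fintype.card {i // B i ≤ A j} = Fintype.card {i // v i ≤ A j} :=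
      Fintype.card_congr ((Tuple.sort v).subtypeEquiv (fun i => Iff.rfl))
    rw [e1, e2]
    refine Fintype.card_le_of_injective (fun x => ⟨x.1, (hge x.1).trans x.2⟩) ?_
    intro x y hxy
    simpa [Subtype.ext_iff] using hxy
  -- sums differ
  obtain ⟨i, hi⟩ := Function.ne_iff.mp hne
  have hsum : ∑ i, v i < ∑ i, u i :=
    Finset.sum_lt_sum (fun i _ => hge i) ⟨i, Finset.mem_univ i, lt_of_le_of_ne (hge i) (Ne.symm hi)⟩
  have hABne : List.ofFn B ≠ List.ofFn A := by
    intro h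
    have : ∑ j, B j = ∑ j, A j := by
      have := congrArg List.sum h
      simpa [List.sum_ofFn] using this
    simp only [hA, hB, Function.comp_apply] at this
    rw [Equiv.sum_comp (Tuple.sort v) v, Equiv.sum_comp (Tuple.sort u) u] at this
    exact absurd this hsum.ne
  have hf2 : List.Forall₂ (· ≤ ·) (List.ofFn B) (List.ofFn A) := by
    rw [List.forall₂_iff_get]
    refine ⟨by simp, ?_⟩
    intro i h1 h2
    simpa using hpw _
  unfold LeximinGT
  rw [sortedVec_eq u, sortedVec_eq v]
  exact lex_of_forall2 hf2 hABne
end
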